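/- Under the setting of fixed-step gradient descent with L-Lipschitz gradient, the congruency satisfies ν_k ≥ ((1 - Lη/2)∑_{i=0}^{k-1}‖∇f(x_i)‖² - (Lη/2)‖∑_{i=0}^{k-1}∇f(x_i)‖²) / (‖∇f(x_k)‖ · ‖∑_{i=0}^{k-1}∇f(x_i)‖). -/

import Mathlib

/-!
Two consequences of the descent lemma `f b ≤ f a + ⟪∇f a, b - a⟫ + L/2 ‖b - a‖²` are compared.
Summed along the iterates it gives `f x₀ - f x_k ≥ η (1 - Lη/2) ∑ ‖∇f xᵢ‖²`; applied once
from `x_k` back to `x₀ = x_k + η ∑ ∇f xᵢ` it gives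
`f x₀ - f x_k ≤ η ⟪∇f x_k, ∑ ∇f xᵢ⟫ + Lη²/2 ‖∑ ∇f xᵢ‖²`.
Dividing the resulting inequality by `η` bounds the numerator of the congruency from below.
-/

open scoped RealInnerProductSpace

open Finset

section Descent

variable {E : Type*} [NormedAddCommGroup E] [InnerProductSpace ℝ E] [CompleteSpace E]
  {f : E → ℝ} {L : ℝ}

theorem hasDerivAt_comp_add_smul (hf : Differentiable ℝ f) (a v : E) (t : ℝ) :
    HasDerivAt (fun s : ℝ => f (a + s • v)) ⟪gradient f (a + t • v), v⟫ t := by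
  have hline : HasDerivAt (fun s : ℝ => a + s • v) v t := by
    simpa using ((hasDerivAt_id t).smul_const v).const_add a
  simpa [InnerProductSpace.toDual_apply_apply, Function.comp_def] using
    (hf (a + t • v)).hasGradientAt.hasFDerivAt.comp_hasDerivAt t hline

theorem le_add_inner_gradient_add_sq (hf : Differentiable ℝ f)
    (hlip : ∀ a b, ‖gradient f b - gradient f a‖ ≤ L * ‖b - a‖) (a b : E) :
    f b ≤ f a + ⟪gradient f a, b - a⟫ + L / 2 * ‖b - a‖ ^ 2 := by
  set v := b - a
  set φ : ℝ → ℝ := fun t => f (a + t • v) - t * ⟪gradient f a, v⟫ - L / 2 * ‖v‖ ^ 2 * t ^ 2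
  have hφ : ∀ t, HasDerivAt φ (⟪gradient f (a + t • v) - gradient f a, v⟫ - L * ‖v‖ ^ 2 * t) t := by
    intro t
    refine (((hasDerivAt_comp_add_smul hf a v t).sub ((hasDerivAt_id t).mul_const _)).sub
      ((hasDerivAt_pow 2 t).const_mul (L / 2 * ‖v‖ ^ 2))).congr_deriv ?_
    rw [inner_sub_left]
    simp only [one_mul, Nat.cast_ofNat]
    ring
  have hslope : ∀ t, 0 ≤ t → ⟪gradient f (a + t • v) - gradient f a, v⟫ ≤ L * ‖v‖ ^ 2 * t := by
    intro t ht
    calc ⟪gradient f (a + t • v) - gradient f a, v⟫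
        ≤ ‖gradient f (a + t • v) - gradient f a‖ * ‖v‖ := real_inner_le_norm _ _
      _ ≤ L * ‖t • v‖ * ‖v‖ := by gcongr; simpa using hlip a (a + t • v)
      _ = L * ‖v‖ ^ 2 * t := by rw [norm_smul, Real.norm_of_nonneg ht]; ring
  have hanti : AntitoneOn φ (Set.Ici 0) := by
    refine antitoneOn_of_hasDerivWithinAt_nonpos (convex_Ici 0)
      (fun t _ => (hφ t).continuousAt.continuousWithinAt) (fun t _ => (hφ t).hasDerivWithinAt)
      fun t ht => ?_
    rw [interior_Ici] at ht
    exact sub_nonpos.2 (hslope t ht.le)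
  have h := hanti Set.self_mem_Ici (Set.mem_Ici.2 zero_le_one) zero_le_one
  simp only [φ, zero_smul, add_zero, one_smul, v, add_sub_cancel] at h
  linarith

theorem le_sub_mul_sq_norm_gradient (hf : Differentiable ℝ f)
    (hlip : ∀ a b, ‖gradient f b - gradient f a‖ ≤ L * ‖b - a‖) (η : ℝ) (a : E) :
    f (a - η • gradient f a) ≤ f a - η * (1 - L * η / 2) * ‖gradient f a‖ ^ 2 := by
  have h := le_add_inner_gradient_add_sq hf hlip a (a - η • gradient f a)
  rw [sub_sub_cancel_left, inner_neg_right, real_inner_smul_right, real_inner_self_eq_norm_sq,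
    norm_neg, norm_smul, Real.norm_eq_abs, mul_pow, sq_abs] at h
  linarith

end Descent

theorem sub_eq_smul_sum_of_step {R M : Type*} [Ring R] [AddCommGroup M] [Module R M]
    {x g : ℕ → M} {η : R} (hstep : ∀ i, x (i + 1) = x i - η • g i) (k : ℕ) :
    x 0 - x k = η • ∑ i ∈ range k, g i := by
  induction k with
  | zero => simp
  | succ k ih => rw [hstep k, sum_range_succ, smul_add, ← ih]; abel

section GradientDescent

variable {E : Type*} [NormedAddCommGroup E] [InnerProductSpace ℝ E] [CompleteSpace E]
  {f : E → ℝ} {L η : ℝ} {x : ℕ → E}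

theorem mul_sum_sq_norm_gradient_le_sub (hf : Differentiable ℝ f)
    (hlip : ∀ a b, ‖gradient f b - gradient f a‖ ≤ L * ‖b - a‖)
    (hstep : ∀ i, x (i + 1) = x i - η • gradient f (x i)) (k : ℕ) :
    η * (1 - L * η / 2) * ∑ i ∈ range k, ‖gradient f (x i)‖ ^ 2 ≤ f (x 0) - f (x k) := by
  rw [← sum_range_sub' (fun i => f (x i)), mul_sum]
  gcongr with i
  have h := le_sub_mul_sq_norm_gradient hf hlip η (x i)
  rw [← hstep i] at h
  linarith

theorem sub_mul_sq_norm_sum_gradient_le_inner (hf : Differentiable ℝ f)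
    (hlip : ∀ a b, ‖gradient f b - gradient f a‖ ≤ L * ‖b - a‖) (hη : 0 < η)
    (hstep : ∀ i, x (i + 1) = x i - η • gradient f (x i)) (k : ℕ) :
    (1 - L * η / 2) * ∑ i ∈ range k, ‖gradient f (x i)‖ ^ 2 -
        L * η / 2 * ‖∑ i ∈ range k, gradient f (x i)‖ ^ 2 ≤
      ⟪gradient f (x k), ∑ i ∈ range k, gradient f (x i)⟫ := by
  have hforward := mul_sum_sq_norm_gradient_le_sub hf hlip hstep k
  have hbackward := le_add_inner_gradient_add_sq hf hlip (x k) (x 0)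
  rw [sub_eq_smul_sum_of_step hstep k, real_inner_smul_right, norm_smul,
    Real.norm_of_nonneg hη.le, mul_pow] at hbackward
  refine le_of_mul_le_mul_left ?_ hη
  linear_combination hforward + hbackward

end GradientDescent

theorem congruency_refined_lower_bound_general (n k : ℕ) (f : EuclideanSpace ℝ (Fin n) → ℝ) (L η : ℝ)
    (x : ℕ → EuclideanSpace ℝ (Fin n))
    (hf : Differentiable ℝ f)
    (hlip : ∀ a b, ‖gradient f b - gradient f a‖ ≤ L * ‖b - a‖)
    (hη : 0 < η)
    (hstep : ∀ i, x (i + 1) = x i - η • gradient f (x i)) :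
    ⟪gradient f (x k), ∑ i ∈ Finset.range k, gradient f (x i)⟫ /
        (‖gradient f (x k)‖ * ‖∑ i ∈ Finset.range k, gradient f (x i)‖) ≥
      ((1 - L * η / 2) * ∑ i ∈ Finset.range k, ‖gradient f (x i)‖ ^ 2 -
          L * η / 2 * ‖∑ i ∈ Finset.range k, gradient f (x i)‖ ^ 2) /
        (‖gradient f (x k)‖ * ‖∑ i ∈ Finset.range k, gradient f (x i)‖) :=
  div_le_div_of_nonneg_right (sub_mul_sq_norm_sum_gradient_le_inner hf hlip hη hstep k)
    (by positivity)

theorem congruency_refined_lower_bound (n k : ℕ) (f : EuclideanSpace ℝ (Fin n) → ℝ) (L η : ℝ)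
    (x : ℕ → EuclideanSpace ℝ (Fin n))
    (hf : Differentiable ℝ f) (hL : 0 ≤ L)
    (hlip : ∀ a b, ‖gradient f b - gradient f a‖ ≤ L * ‖b - a‖)
    (hη : 0 < η)
    (hstep : ∀ i, x (i + 1) = x i - η • gradient f (x i))
    (hgk : gradient f (x k) ≠ 0)
    (hsum : ∑ i ∈ Finset.range k, gradient f (x i) ≠ 0) :
    ⟪gradient f (x k), ∑ i ∈ Finset.range k, gradient f (x i)⟫ /
        (‖gradient f (x k)‖ * ‖∑ i ∈ Finset.range k, gradient f (x i)‖) ≥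
      ((1 - L * η / 2) * ∑ i ∈ Finset.range k, ‖gradient f (x i)‖ ^ 2 -
          L * η / 2 * ‖∑ i ∈ Finset.range k, gradient f (x i)‖ ^ 2) /
        (‖gradient f (x k)‖ * ‖∑ i ∈ Finset.range k, gradient f (x i)‖) :=
  congruency_refined_lower_bound_general n k f L η x hf hlip hη hstep
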